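/- arXiv:2101.06209 — 5 statements merged into one kernel-verified Lean document; each statement's English description precedes it below -/
import Mathlib

section
/- For n = 2 and n = 3, and for every integer k ≥ 1, one has n · ∑_{m=0}^{k-1} 1/(2m+n) ≤ √(k(k+n-1)/n). -/
/-!
Induction on `k`: the right-hand side `√(k (k + c - 1) / c)` grows by at least the new summand
`c / (2k + c)`. Squaring, with `x = 2k + c`, this increment bound becomes
`2 c² x √(k (k + c - 1) / c) ≤ x³ - c³`, and since `x³ - c³ = 2k (x² + xc + c²) ≥ 6kxc`,
it reduces to `c (k + c - 1) ≤ 9k`, which holds for `k ≥ 1` as soon as `c ≤ 3`.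
-/

open Finset

theorem sqrt_add_div_le_sqrt_succ {c k : ℝ} (hc₀ : 0 < c) (hc : c ≤ 3) (hk : 1 ≤ k) :
    √(k * (k + c - 1) / c) + c / (2 * k + c) ≤ √((k + 1) * (k + c) / c) := by
  set x := 2 * k + c with hx
  set a := √(k * (k + c - 1) / c)
  have hx₀ : 0 < x := by positivity
  have ha : c * a ^ 2 = k * (k + c - 1) := by
    rw [Real.sq_sqrt (div_nonneg (mul_nonneg (by linarith) (by linarith)) hc₀.le)]
    field_simp
  have hcube : 2 * c ^ 2 * x * a ≤ x ^ 3 - c ^ 3 := by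
    have hamgm : 3 * x * c ≤ x ^ 2 + x * c + c ^ 2 := by nlinarith [sq_nonneg (x - c)]
    have hlin : c * (k + c - 1) ≤ 9 * k := by nlinarith
    apply le_of_pow_le_pow_left₀ two_ne_zero (by nlinarith)
    calc (2 * c ^ 2 * x * a) ^ 2 = 4 * k * c ^ 2 * x ^ 2 * (c * (k + c - 1)) := by
          linear_combination (4 * c ^ 3 * x ^ 2) * ha
      _ ≤ 4 * k * c ^ 2 * x ^ 2 * (9 * k) := by gcongr
      _ = (2 * k) ^ 2 * (3 * x * c) ^ 2 := by ring
      _ ≤ (2 * k) ^ 2 * (x ^ 2 + x * c + c ^ 2) ^ 2 := by gcongr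
      _ = (x ^ 3 - c ^ 3) ^ 2 := by rw [hx]; ring
  have hexpand : (a + c / x) ^ 2 * c = k * (k + c - 1) + (2 * c ^ 2 * x * a + c ^ 3) / x ^ 2 := by
    field_simp
    linear_combination x ^ 2 * ha
  have hincr : (2 * c ^ 2 * x * a + c ^ 3) / x ^ 2 ≤ x := by
    rw [div_le_iff₀ (by positivity)]
    linarith
  rw [Real.le_sqrt (by positivity) (by positivity), le_div_iff₀ hc₀, hexpand]
  linarith

theorem mul_sum_one_div_le_sqrt {c : ℝ} (hc₀ : 0 < c) (hc : c ≤ 3) (k : ℕ) :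
    c * ∑ m ∈ range k, 1 / (2 * m + c) ≤ √(k * (k + c - 1) / c) := by
  induction k with
  | zero => simp
  | succ k ih =>
    rw [sum_range_succ, mul_add, mul_one_div]
    push_cast
    rcases k.eq_zero_or_pos with rfl | hk
    · simp [hc₀.ne']
    · calc _ ≤ √(k * (k + c - 1) / c) + c / (2 * k + c) := by gcongr
        _ ≤ √((k + 1) * (k + c) / c) :=
          sqrt_add_div_le_sqrt_succ hc₀ hc (by exact_mod_cast hk)
        _ = _ := by ring_nf

theorem stmt_0_general (n : ℕ) (hn : n = 2 ∨ n = 3) (k : ℕ) :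
    (n : ℝ) * ∑ m ∈ Finset.range k, (1 : ℝ) / (2 * m + n) ≤
      Real.sqrt ((k * (k + n - 1)) / n) := by
  have hn₀ : (0 : ℝ) < n := by rcases hn with rfl | rfl <;> norm_num
  have hn₃ : (n : ℝ) ≤ 3 := by rcases hn with rfl | rfl <;> norm_num
  exact mul_sum_one_div_le_sqrt hn₀ hn₃ k

theorem stmt_0 (n : ℕ) (hn : n = 2 ∨ n = 3) (k : ℕ) (hk : 1 ≤ k) :
    (n : ℝ) * ∑ m ∈ Finset.range k, (1 : ℝ) / (2 * m + n) ≤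
      Real.sqrt ((k * (k + n - 1)) / n) :=
  stmt_0_general n hn k
end

section
/- For every real x ≥ 0, e^{-x} = (1/√π) ∫_0^∞ e^{-y - x²/(4y)} y^{-1/2} dy. -/
/-!
Substituting `y = u ^ 2` turns the integral into `2 ∫₀^∞ exp (-(u² + b²/u²)) du` with `b = x / 2`,
and `u² + b²/u² = (u - b/u)² + 2b`. The Cauchy–Schlömilch substitution `v = u - b/u` maps `(0, ∞)`
bijectively onto `ℝ` with `dv = (1 + b/u²) du`, while the involution `u ↦ b/u` shows that for an
even integrand the weight `b/u²` contributes as much as the weight `1`. Hence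
`∫₀^∞ g (u - b/u) du = ½ ∫ g` for every even integrable `g`, and the Gaussian integral finishes.
-/

open MeasureTheory Real Set

section CauchySchlomilch

variable {E : Type*} [NormedAddCommGroup E] [NormedSpace ℝ E] {b : ℝ}

lemma image_sub_div_self_Ioi (hb : 0 < b) : (fun u : ℝ => u - b / u) '' Ioi 0 = univ := by
  refine eq_univ_of_forall fun v => ?_
  -- the positive root of `u ^ 2 - v * u - b`
  have hroot : |v| < √(v ^ 2 + 4 * b) := by
    rw [← sqrt_sq_eq_abs]
    exact sqrt_lt_sqrt (sq_nonneg v) (by linarith)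
  have hsq : √(v ^ 2 + 4 * b) ^ 2 = v ^ 2 + 4 * b := sq_sqrt (by positivity)
  have hu : 0 < (v + √(v ^ 2 + 4 * b)) / 2 := by linarith [neg_abs_le v]
  refine ⟨_, hu, ?_⟩
  have : b / ((v + √(v ^ 2 + 4 * b)) / 2) = (v + √(v ^ 2 + 4 * b)) / 2 - v := by
    rw [div_eq_iff hu.ne']
    nlinarith
  simp only [this, sub_sub_cancel]

lemma strictMonoOn_sub_div_self (hb : 0 < b) : StrictMonoOn (fun u : ℝ => u - b / u) (Ioi 0) :=
  fun _ hu _ _ huv => sub_lt_sub huv (div_lt_div_of_pos_left hb hu huv)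

lemma hasDerivAt_sub_div_self {u : ℝ} (hu : u ≠ 0) :
    HasDerivAt (fun u : ℝ => u - b / u) (1 + b / u ^ 2) u := by
  have := (hasDerivAt_id' u).sub ((hasDerivAt_inv hu).const_mul b)
  simp only [mul_neg, sub_neg_eq_add, ← div_eq_mul_inv] at this
  exact this

lemma integral_Ioi_smul_comp_sub_div_self (hb : 0 < b) (g : ℝ → E) :
    ∫ u in Ioi 0, (1 + b / u ^ 2) • g (u - b / u) = ∫ v, g v := by
  have := integral_image_eq_integral_abs_deriv_smul measurableSet_Ioi
    (fun u hu => (hasDerivAt_sub_div_self (b := b) (ne_of_gt hu)).hasDerivWithinAt)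
    (strictMonoOn_sub_div_self hb).injOn g
  rw [image_sub_div_self_Ioi hb, setIntegral_univ] at this
  rw [this]
  refine setIntegral_congr_fun measurableSet_Ioi fun u hu => ?_
  have : 0 < 1 + b / u ^ 2 := by have := mem_Ioi.1 hu; positivity
  simp only [abs_of_pos this]

lemma integrableOn_Ioi_smul_comp_sub_div_self (hb : 0 < b) {g : ℝ → E} (hg : Integrable g) :
    IntegrableOn (fun u => (1 + b / u ^ 2) • g (u - b / u)) (Ioi 0) := by
  have := (integrableOn_image_iff_integrableOn_abs_deriv_smul measurableSet_Ioi
    (fun u hu => (hasDerivAt_sub_div_self (b := b) (ne_of_gt hu)).hasDerivWithinAt)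
    (strictMonoOn_sub_div_self hb).injOn g).1
  rw [image_sub_div_self_Ioi hb, integrableOn_univ] at this
  refine (this hg).congr_fun (fun u hu => ?_) measurableSet_Ioi
  have : 0 < 1 + b / u ^ 2 := by have := mem_Ioi.1 hu; positivity
  simp only [abs_of_pos this]

lemma integrableOn_Ioi_comp_sub_div_self (hb : 0 < b) {g : ℝ → E} (hg : Integrable g) :
    IntegrableOn (fun u => g (u - b / u)) (Ioi 0) := by
  have hbound : ∀ᵐ u ∂volume.restrict (Ioi 0), ‖(1 + b / u ^ 2)⁻¹‖ ≤ 1 := by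
    filter_upwards [ae_restrict_mem measurableSet_Ioi] with u hu
    have : 0 ≤ b / u ^ 2 := by positivity
    rw [norm_inv, Real.norm_of_nonneg (by positivity)]
    exact inv_le_one_of_one_le₀ (by linarith)
  have hmeas : Measurable fun u : ℝ => (1 + b / u ^ 2)⁻¹ := by fun_prop
  have : IntegrableOn (fun u => (1 + b / u ^ 2)⁻¹ • (1 + b / u ^ 2) • g (u - b / u)) (Ioi 0) :=
    (integrableOn_Ioi_smul_comp_sub_div_self hb hg).bdd_smul 1 hmeas.aestronglyMeasurable hbound
  refine this.congr_fun (fun u hu => ?_) measurableSet_Ioi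
  have : 0 < 1 + b / u ^ 2 := by have := mem_Ioi.1 hu; positivity
  simp only [smul_smul, inv_mul_cancel₀ this.ne', one_smul]

lemma integral_Ioi_div_sq_smul_comp_div_self_sub (hb : 0 < b) (g : ℝ → E) :
    ∫ u in Ioi 0, (b / u ^ 2) • g (b / u - u) = ∫ u in Ioi 0, g (u - b / u) := by
  have himage : (fun u : ℝ => b / u) '' Ioi 0 = Ioi 0 := by
    ext v
    refine ⟨fun ⟨u, hu, hv⟩ => hv ▸ div_pos hb hu, fun hv => ⟨b / v, div_pos hb hv, ?_⟩⟩
    field_simp [(mem_Ioi.1 hv).ne']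
  have hinj : InjOn (fun u : ℝ => b / u) (Ioi 0) := fun u hu v hv huv => by
    field_simp [(mem_Ioi.1 hu).ne', (mem_Ioi.1 hv).ne'] at huv
    exact huv.symm
  have hderiv : ∀ u ∈ Ioi (0 : ℝ), HasDerivWithinAt (fun u => b / u) (-(b / u ^ 2)) (Ioi 0) u :=
    fun u hu => by
      simpa [div_eq_mul_inv] using
        ((hasDerivAt_inv (mem_Ioi.1 hu).ne').const_mul b).hasDerivWithinAt
  have := integral_image_eq_integral_abs_deriv_smul measurableSet_Ioi hderiv hinj
    (fun v => g (v - b / v))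
  rw [himage] at this
  rw [this]
  refine setIntegral_congr_fun measurableSet_Ioi fun u hu => ?_
  have : 0 < b / u ^ 2 := by have := mem_Ioi.1 hu; positivity
  simp only [abs_neg, abs_of_pos this, div_div_cancel₀ hb.ne']

theorem integral_Ioi_comp_sub_div_self (hb : 0 ≤ b) {g : ℝ → E} (hg : Integrable g)
    (heven : ∀ v, g (-v) = g v) :
    ∫ u in Ioi 0, g (u - b / u) = (2 : ℝ)⁻¹ • ∫ v, g v := by
  rcases hb.eq_or_lt with rfl | hb
  · have hIic : ∫ v in Iic 0, g v = ∫ v in Ioi 0, g v := by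
      have := integral_comp_neg_Ioi 0 g
      rw [neg_zero] at this
      simp only [← this, heven]
    simp only [zero_div, sub_zero]
    rw [← intervalIntegral.integral_Iic_add_Ioi hg.integrableOn hg.integrableOn, hIic,
      ← two_smul ℝ, smul_smul]
    norm_num
  · have hweighted :
        ∫ u in Ioi 0, (b / u ^ 2) • g (u - b / u) = ∫ u in Ioi 0, g (u - b / u) := by
      rw [← integral_Ioi_div_sq_smul_comp_div_self_sub hb g]
      refine setIntegral_congr_fun measurableSet_Ioi fun u _ => ?_
      rw [← heven (b / u - u), neg_sub]
    have hsplit : ∫ u in Ioi 0, (b / u ^ 2) • g (u - b / u)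
        = (∫ v, g v) - ∫ u in Ioi 0, g (u - b / u) := by
      rw [← integral_Ioi_smul_comp_sub_div_self hb g, ← integral_sub
        (integrableOn_Ioi_smul_comp_sub_div_self hb hg) (integrableOn_Ioi_comp_sub_div_self hb hg)]
      simp only [add_smul, one_smul, add_sub_cancel_left]
    rw [hweighted, eq_sub_iff_add_eq, ← two_smul ℝ] at hsplit
    rw [← hsplit, smul_smul]
    norm_num

end CauchySchlomilch

theorem integral_Ioi_exp_neg_sq_add_sq_div_sq {b : ℝ} (hb : 0 ≤ b) :
    ∫ u in Ioi 0, exp (-(u ^ 2 + b ^ 2 / u ^ 2)) = √π / 2 * exp (-(2 * b)) := by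
  have hsq : ∀ u ∈ Ioi (0 : ℝ),
      exp (-(u ^ 2 + b ^ 2 / u ^ 2)) = exp (-(2 * b)) * exp (-(u - b / u) ^ 2) := by
    intro u hu
    have hu : u ≠ 0 := (mem_Ioi.1 hu).ne'
    rw [← exp_add]
    congr 1
    field_simp
    ring
  have hgauss := integral_Ioi_comp_sub_div_self hb (integrable_exp_neg_mul_sq one_pos)
    (fun v => by simp only [neg_sq])
  have hgauss_univ : ∫ v, exp (-v ^ 2) = √π := by simpa using integral_gaussian 1
  simp only [neg_mul, one_mul, smul_eq_mul, hgauss_univ] at hgauss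
  rw [setIntegral_congr_fun measurableSet_Ioi hsq, integral_const_mul, hgauss]
  ring

theorem stmt_2 (x : ℝ) (hx : 0 ≤ x) :
    Real.exp (-x) =
      (1 / Real.sqrt π) *
        ∫ y in Set.Ioi (0 : ℝ), Real.exp (-y - x ^ 2 / (4 * y)) / Real.sqrt y := by
  -- `y = u ^ 2`
  have hsubst : ∫ y in Ioi (0 : ℝ), exp (-y - x ^ 2 / (4 * y)) / √y
      = ∫ u in Ioi (0 : ℝ), 2 * exp (-(u ^ 2 + (x / 2) ^ 2 / u ^ 2)) := by
    rw [← integral_comp_rpow_Ioi_of_pos two_pos]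
    refine setIntegral_congr_fun measurableSet_Ioi fun u hu => ?_
    have hu : 0 < u := hu
    have hexp : -u ^ 2 - x ^ 2 / (4 * u ^ 2) = -(u ^ 2 + (x / 2) ^ 2 / u ^ 2) := by ring
    rw [show (2 : ℝ) - 1 = 1 by norm_num, rpow_one, rpow_two, sqrt_sq hu.le, hexp, smul_eq_mul]
    field_simp
  rw [hsubst, integral_const_mul, integral_Ioi_exp_neg_sq_add_sq_div_sq (by linarith)]
  field_simp
end

section
/- For n ∈ {2,3}, the function h(k) = 2/n + ln((k + n/2 - 1)/(n/2)) − (2/n)·√(k(k+n-1)/n), viewed as a function of real k ≥ 4, is nonincreasing in k and satisfies h(4) ≤ 0; hence h(k) ≤ 0 for all real k ≥ 4. -/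
/-!
Writing `s = √(k(k+n-1)/n)`, the derivative of `h` is `1/(k+n/2-1) - (2k+n-1)/(n² s)`. Since
`4k(k+n-1) ≤ (2k+n-1)²`, its sign reduces to `n³ ≤ (2k+n-2)²`, which holds for `k ≥ 4` as soon as
`n ≤ 4` (then `n³ ≤ (2n)² ≤ (n+6)²`). So `h` is antitone on `[4, ∞)`, and `h 4 ≤ 0` is a numerical
check against Mathlib's bounds on `log 2` and `log 3`.
-/

open Real Set

noncomputable def logSubSqrt (n k : ℝ) : ℝ :=
  2 / n + log ((k + n / 2 - 1) / (n / 2)) - 2 / n * √(k * (k + n - 1) / n)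

section

variable {n k : ℝ}

theorem hasDerivAt_logSubSqrt (hn : 0 < n) (hk : 1 ≤ k) :
    HasDerivAt (logSubSqrt n)
      (1 / (k + n / 2 - 1) - (2 * k + n - 1) / (n ^ 2 * √(k * (k + n - 1) / n))) k := by
  have hA : 0 < k + n / 2 - 1 := by linarith
  have hQ : 0 < k * (k + n - 1) / n := by apply div_pos <;> nlinarith
  have hlog : HasDerivAt (fun x => log ((x + n / 2 - 1) / (n / 2)))
      (1 / (n / 2) / ((k + n / 2 - 1) / (n / 2))) k :=
    ((((hasDerivAt_id k).add_const _).sub_const 1).div_const _).log (by positivity)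
  have hquad : HasDerivAt (fun x => x * (x + n - 1) / n) ((1 * (k + n - 1) + k * 1) / n) k := by
    simpa only [id_eq, Pi.mul_apply, ← add_sub_assoc] using
      ((hasDerivAt_id k).mul ((hasDerivAt_id k).add_const (n - 1))).div_const n
  have hs : 0 < √(k * (k + n - 1) / n) := sqrt_pos.mpr hQ
  refine ((hlog.const_add (2 / n)).sub ((hquad.sqrt hQ.ne').const_mul (2 / n))).congr_deriv ?_
  field_simp
  ring

theorem sq_mul_sqrt_le (hn : 0 < n) (hn4 : n ≤ 4) (hk : 4 ≤ k) :
    n ^ 2 * √(k * (k + n - 1) / n) ≤ (k + n / 2 - 1) * (2 * k + n - 1) := by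
  have hB : 0 ≤ (k + n / 2 - 1) * (2 * k + n - 1) := mul_nonneg (by linarith) (by linarith)
  rw [← le_div_iff₀' (by positivity), sqrt_le_iff]
  refine ⟨by positivity, ?_⟩
  have hcube : n ^ 3 ≤ (2 * k + n - 2) ^ 2 :=
    calc n ^ 3 ≤ (2 * n) ^ 2 := by nlinarith [sq_nonneg n]
      _ ≤ (2 * k + n - 2) ^ 2 := by gcongr; linarith
  have hamgm : 4 * (k * (k + n - 1)) ≤ (2 * k + n - 1) ^ 2 := by nlinarith [sq_nonneg (n - 1)]
  rw [div_le_iff₀ hn, div_pow, div_mul_eq_mul_div, le_div_iff₀ (by positivity)]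
  calc k * (k + n - 1) * (n ^ 2) ^ 2 = n ^ 3 * (k * (k + n - 1)) * n := by ring
    _ ≤ (2 * k + n - 2) ^ 2 * ((2 * k + n - 1) ^ 2 / 4) * n := by
        gcongr
        · nlinarith
        · linarith
    _ = ((k + n / 2 - 1) * (2 * k + n - 1)) ^ 2 * n := by ring

theorem antitoneOn_logSubSqrt (hn : 0 < n) (hn4 : n ≤ 4) : AntitoneOn (logSubSqrt n) (Ici 4) := by
  have hderiv (x : ℝ) (hx : 4 ≤ x) := hasDerivAt_logSubSqrt hn (by linarith : 1 ≤ x)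
  refine antitoneOn_of_hasDerivWithinAt_nonpos (convex_Ici 4)
    (fun x hx => (hderiv x hx).continuousAt.continuousWithinAt)
    (fun x hx => (hderiv x (interior_subset hx)).hasDerivWithinAt) fun x hx => ?_
  have hx : 4 ≤ x := interior_subset (s := Ici 4) hx
  have hs : 0 < √(x * (x + n - 1) / n) := sqrt_pos.mpr (by apply div_pos <;> nlinarith)
  rw [sub_nonpos, div_le_div_iff₀ (by linarith) (by positivity)]
  linarith [sq_mul_sqrt_le hn hn4 hx]

end

theorem logSubSqrt_two_four_nonpos : logSubSqrt 2 4 ≤ 0 := by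
  have hlog : log 4 = 2 * log 2 := log_four_eq
  have hsqrt : (3 : ℝ) ≤ √10 := le_sqrt_of_sq_le (by norm_num)
  norm_num [logSubSqrt]
  linarith [log_two_lt_d9]

theorem logSubSqrt_three_four_nonpos : logSubSqrt 3 4 ≤ 0 := by
  have hsqrt : (2.82 : ℝ) ≤ √8 := le_sqrt_of_sq_le (by norm_num)
  norm_num [logSubSqrt]
  linarith [log_three_lt_d9]

theorem stmt_3 (n : ℝ) (hn : n = 2 ∨ n = 3)
    (h : ℝ → ℝ)
    (hdef : ∀ k : ℝ, h k =
      2 / n + Real.log ((k + n / 2 - 1) / (n / 2)) -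
        (2 / n) * Real.sqrt (k * (k + n - 1) / n)) :
    AntitoneOn h (Set.Ici (4 : ℝ)) ∧ h 4 ≤ 0 ∧ ∀ k : ℝ, 4 ≤ k → h k ≤ 0 := by
  obtain rfl : h = logSubSqrt n := funext hdef
  have hanti : AntitoneOn (logSubSqrt n) (Ici 4) := by
    apply antitoneOn_logSubSqrt <;> rcases hn with rfl | rfl <;> norm_num
  have hfour : logSubSqrt n 4 ≤ 0 := by
    rcases hn with rfl | rfl
    exacts [logSubSqrt_two_four_nonpos, logSubSqrt_three_four_nonpos]
  exact ⟨hanti, hfour, fun k hk => (hanti self_mem_Ici hk hk).trans hfour⟩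
end

section
/- Let c_λ = Γ(λ+1)/(Γ(1/2)Γ(λ+1/2)). Then for every real s, lim_{λ→∞} (c_λ/√(2λ)) · (1 − s²/(2λ))^{λ−1/2} · 𝟙_{[−√(2λ),√(2λ)]}(s) = e^{−s²/2}/√(2π). -/
open Filter Real Topology

/-!
By log-convexity of `Γ` (Wendel's inequality), `Γ(x + a) ~ x ^ a Γ(x)` for `0 < a < 1`, so
`c_λ / √(2λ) → 1 / √(2π)` using `Γ(1/2) = √π`. The power `(1 - s²/(2λ)) ^ (λ - 1/2)` tends to
`exp (-s²/2)` by the classical limit `(1 + t/x) ^ x → exp t`, and the indicator is eventually `1`.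
-/

theorem Real.Gamma_add_le_rpow_mul_Gamma {x a : ℝ} (hx : 0 < x) (ha₀ : 0 < a) (ha₁ : a < 1) :
    Gamma (x + a) ≤ x ^ a * Gamma x := by
  have hΓ := Gamma_pos_of_pos hx
  calc Gamma (x + a) = Gamma ((1 - a) * x + a * (x + 1)) := by ring_nf
    _ ≤ Gamma x ^ (1 - a) * Gamma (x + 1) ^ a :=
      Gamma_mul_add_mul_le_rpow_Gamma_mul_rpow_Gamma hx (by linarith) (by linarith) ha₀
        (by ring)
    _ = x ^ a * Gamma x := by
      rw [Gamma_add_one hx.ne', mul_rpow hx.le hΓ.le, mul_left_comm, ← rpow_add hΓ,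
        sub_add_cancel, rpow_one]

theorem tendsto_one_add_div_atTop_nhds_one (t : ℝ) :
    Tendsto (fun x : ℝ => 1 + t / x) atTop (𝓝 1) := by
  simpa using (tendsto_const_nhds (x := (1 : ℝ))).add
    ((tendsto_const_nhds (x := t)).div_atTop tendsto_id)

theorem Real.tendsto_Gamma_add_div_rpow_mul_Gamma {a : ℝ} (ha₀ : 0 < a) (ha₁ : a < 1) :
    Tendsto (fun x => Gamma (x + a) / (x ^ a * Gamma x)) atTop (𝓝 1) := by
  have hlower : Tendsto (fun x : ℝ => (x / (x + a)) ^ (1 - a)) atTop (𝓝 1) := by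
    have h : Tendsto (fun x : ℝ => (1 + a / x)⁻¹) atTop (𝓝 1) := by
      simpa using (tendsto_one_add_div_atTop_nhds_one a).inv₀ one_ne_zero
    replace h := h.rpow_const (p := 1 - a) (Or.inl one_ne_zero)
    rw [one_rpow] at h
    refine h.congr' ?_
    filter_upwards [eventually_gt_atTop 0] with x hx
    field_simp
  refine tendsto_of_tendsto_of_tendsto_of_le_of_le' hlower tendsto_const_nhds ?_ ?_
  · filter_upwards [eventually_gt_atTop 0] with x hx
    have h := Gamma_add_le_rpow_mul_Gamma (x := x + a) (a := 1 - a) (by linarith) (by linarith)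
      (by linarith)
    rw [show x + a + (1 - a) = x + 1 by ring, Gamma_add_one hx.ne'] at h
    have hxx : x ^ (1 - a) * x ^ a = x := by rw [← rpow_add hx, sub_add_cancel, rpow_one]
    rw [le_div_iff₀ (by positivity [Gamma_pos_of_pos hx]), div_rpow hx.le (by linarith)]
    calc x ^ (1 - a) / (x + a) ^ (1 - a) * (x ^ a * Gamma x)
        = x * Gamma x / (x + a) ^ (1 - a) := by rw [div_mul_eq_mul_div, ← mul_assoc, hxx]
      _ ≤ Gamma (x + a) := by rw [div_le_iff₀ (by positivity)]; linarith
  · filter_upwards [eventually_gt_atTop 0] with x hx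
    exact div_le_one_of_le₀ (Gamma_add_le_rpow_mul_Gamma hx ha₀ ha₁)
      (by positivity [Gamma_pos_of_pos hx])

theorem Real.tendsto_one_add_div_rpow_add_exp (t c : ℝ) :
    Tendsto (fun x : ℝ => (1 + t / x) ^ (x + c)) atTop (𝓝 (exp t)) := by
  have hbase := tendsto_one_add_div_atTop_nhds_one t
  have hc : Tendsto (fun x : ℝ => (1 + t / x) ^ c) atTop (𝓝 1) := by
    simpa using hbase.rpow_const (p := c) (Or.inl one_ne_zero)
  have h := (tendsto_one_add_div_rpow_exp t).mul hc
  rw [mul_one] at h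
  refine h.congr' ?_
  filter_upwards [hbase.eventually (lt_mem_nhds one_pos)] with x hx
  rw [rpow_add hx]

theorem tendsto_Gamma_add_one_div_Gamma_mul_Gamma_div_sqrt :
    Tendsto (fun l : ℝ => Gamma (l + 1) / (Gamma (1 / 2) * Gamma (l + 1 / 2)) / √(2 * l))
      atTop (𝓝 (1 / √(2 * π))) := by
  have h := ((tendsto_Gamma_add_div_rpow_mul_Gamma (a := 1 / 2) (by norm_num)
    (by norm_num)).inv₀ one_ne_zero).div_const √(2 * π)
  rw [inv_one] at h
  refine h.congr' ?_
  filter_upwards [eventually_gt_atTop 0] with l hl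
  have hsqrt : √l ^ 2 = l := sq_sqrt hl.le
  have hΓ := Gamma_pos_of_pos hl
  have hΓ' := Gamma_pos_of_pos (by linarith : 0 < l + 1 / 2)
  rw [Gamma_add_one hl.ne', Gamma_one_half_eq, sqrt_mul zero_le_two, sqrt_mul zero_le_two,
    ← sqrt_eq_rpow]
  field_simp
  rw [hsqrt]

theorem stmt_8 (s : ℝ) :
    Tendsto
      (fun l : ℝ =>
        (Real.Gamma (l + 1) / (Real.Gamma (1 / 2) * Real.Gamma (l + 1 / 2))) /
            Real.sqrt (2 * l) *
          (1 - s ^ 2 / (2 * l)) ^ (l - 1 / 2) *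
          Set.indicator (Set.Icc (-Real.sqrt (2 * l)) (Real.sqrt (2 * l)))
            (fun _ => (1 : ℝ)) s)
      atTop (nhds (Real.exp (-s ^ 2 / 2) / Real.sqrt (2 * π))) := by
  have hpow : Tendsto (fun l : ℝ => (1 - s ^ 2 / (2 * l)) ^ (l - 1 / 2)) atTop
      (𝓝 (exp (-s ^ 2 / 2))) := by
    refine (tendsto_one_add_div_rpow_add_exp (-s ^ 2 / 2) (-1 / 2)).congr' ?_
    filter_upwards [eventually_ne_atTop 0] with l hl
    congr 1 <;> field_simp <;> ring
  have hind : ∀ᶠ l : ℝ in atTop,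
      Set.indicator (Set.Icc (-√(2 * l)) √(2 * l)) (fun _ => (1 : ℝ)) s = 1 := by
    filter_upwards [eventually_ge_atTop (s ^ 2 / 2)] with l hl
    exact Set.indicator_of_mem (abs_le.mp (abs_le_sqrt (by linarith))) (fun _ => (1 : ℝ))
  have h := (tendsto_Gamma_add_one_div_Gamma_mul_Gamma_div_sqrt.mul hpow).mul
    (tendsto_const_nhds (x := (1 : ℝ)))
  rw [one_div_mul_eq_div, mul_one] at h
  refine h.congr' ?_
  filter_upwards [hind] with l hl
  rw [hl]
end

section
/- For n = 2 and n = 3, the quantity n·∑_{m=0}^{k-1} 1/(2m+n) − √(k(k+n−1)/n) is ≤ 0 with equality if and only if k = 1 (among k ≥ 1). -/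
lemma key_step2 (k : ℝ) (hk : 1 ≤ k) :
    Real.sqrt (k * (k + 1) / 2) + 2 / (2 * k + 2) < Real.sqrt ((k + 1) * (k + 2) / 2) := by
  have hk1 : (0:ℝ) < k + 1 := by linarith
  set u := 1/(k+1) with hudef
  have hu0 : 0 < u := by positivity
  have hu : u * (k+1) = 1 := by rw [hudef]; field_simp
  set s := Real.sqrt (k * (k + 1) / 2) with hs
  have hs0 : 0 ≤ s := Real.sqrt_nonneg _
  have hs2 : s ^ 2 = k * (k + 1) / 2 := Real.sq_sqrt (by positivity)
  have hy0 : (0:ℝ) < ((k+1)^2 - u) / 2 := by nlinarith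
  have hsy : s < ((k+1)^2 - u) / 2 := by
    rw [hs, Real.sqrt_lt' hy0]
    nlinarith [sq_nonneg (k-1), sq_nonneg k, sq_nonneg u, mul_pos hu0 hu0]
  rw [Real.lt_sqrt (by positivity)]
  have h2 : 2 / (2*k+2) = u := by rw [hudef]; field_simp
  rw [h2]
  nlinarith [mul_lt_mul_of_pos_left hsy hu0, hu, hs2, hu0, hs0]

lemma key_step3 (k : ℝ) (hk : 1 ≤ k) :
    Real.sqrt (k * (k + 2) / 3) + 3 / (2 * k + 3) < Real.sqrt ((k + 1) * (k + 3) / 3) := by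
  have hk1 : (0:ℝ) < 2*k + 3 := by linarith
  set u := 1/(2*k+3) with hudef
  have hu0 : 0 < u := by positivity
  have hu : u * (2*k+3) = 1 := by rw [hudef]; field_simp
  have hu5 : u ≤ 1/5 := by nlinarith
  set s := Real.sqrt (k * (k + 2) / 3) with hs
  have hs0 : 0 ≤ s := Real.sqrt_nonneg _
  have hs2 : s ^ 2 = k * (k + 2) / 3 := Real.sq_sqrt (by positivity)
  have hy0 : (0:ℝ) < (2*k+3)^2/18 - 3*u/2 := by nlinarith
  have hsy : s < (2*k+3)^2/18 - 3*u/2 := by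
    rw [hs, Real.sqrt_lt' hy0]
    nlinarith [sq_nonneg (k-1), sq_nonneg k, sq_nonneg u, mul_pos hu0 hu0,
      mul_le_of_le_one_right hu0.le (by linarith : u ≤ 1)]
  rw [Real.lt_sqrt (by positivity)]
  have h2 : 3 / (2*k+3) = 3*u := by rw [hudef]; field_simp
  rw [h2]
  nlinarith [mul_lt_mul_of_pos_left hsy hu0, hu, hs2, hu0, hs0]

lemma stmt_16_aux (n : ℕ) (hn : n = 2 ∨ n = 3) (k : ℕ) (hk : 1 ≤ k) :
    ((n:ℝ) * ∑ m ∈ Finset.range k, (1:ℝ)/(2*m+n) ≤ Real.sqrt ((k*(k+n-1))/n)) ∧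
    (2 ≤ k → (n:ℝ) * ∑ m ∈ Finset.range k, (1:ℝ)/(2*m+n) < Real.sqrt ((k*(k+n-1))/n)) := by
  induction k, hk using Nat.le_induction with
  | base =>
    refine ⟨?_, by omega⟩
    rcases hn with h|h <;> subst h <;> norm_num [Finset.sum_range_one]
  | succ k hk ih =>
    have hk1 : (1:ℝ) ≤ (k:ℝ) := by exact_mod_cast hk
    have hstep : Real.sqrt (((k:ℝ)*((k:ℝ)+(n:ℝ)-1))/(n:ℝ)) + (n:ℝ)/(2*(k:ℝ)+(n:ℝ))
        < Real.sqrt ((((k:ℝ)+1)*(((k:ℝ)+1)+(n:ℝ)-1))/(n:ℝ)) := by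
      rcases hn with h|h <;> subst h <;> push_cast
      · have := key_step2 (k:ℝ) hk1
        convert this using 3 <;> ring
      · have := key_step3 (k:ℝ) hk1
        convert this using 3 <;> ring
    have hstrict : (n:ℝ) * ∑ m ∈ Finset.range (k+1), (1:ℝ)/(2*m+n)
        < Real.sqrt (((k+1:ℕ)*((k+1:ℕ)+n-1))/n) := by
      push_cast
      calc (n:ℝ) * ∑ m ∈ Finset.range (k+1), (1:ℝ)/(2*m+n)
          = (n:ℝ) * (∑ m ∈ Finset.range k, (1:ℝ)/(2*m+n)) + (n:ℝ)/(2*(k:ℝ)+(n:ℝ)) := by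
            rw [Finset.sum_range_succ]; ring
        _ ≤ Real.sqrt (((k:ℝ)*((k:ℝ)+(n:ℝ)-1))/(n:ℝ)) + (n:ℝ)/(2*(k:ℝ)+(n:ℝ)) := by
            have := ih.1; push_cast at this; linarith
        _ < _ := hstep
    exact ⟨hstrict.le, fun _ => hstrict⟩

theorem stmt_16 (n : ℕ) (hn : n = 2 ∨ n = 3) (k : ℕ) (hk : 1 ≤ k) :
    (n : ℝ) * ∑ m ∈ Finset.range k, (1 : ℝ) / (2 * m + n) -
        Real.sqrt ((k * (k + n - 1)) / n) ≤ 0 ∧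
    ((n : ℝ) * ∑ m ∈ Finset.range k, (1 : ℝ) / (2 * m + n) -
        Real.sqrt ((k * (k + n - 1)) / n) = 0 ↔ k = 1) := by
  obtain ⟨h1, h2⟩ := stmt_16_aux n hn k hk
  refine ⟨by linarith, ?_, ?_⟩
  · intro heq
    by_contra hne
    have h2k : 2 ≤ k := by omega
    have := h2 h2k
    linarith
  · rintro rfl
    rcases hn with h|h <;> subst h <;> norm_num [Finset.sum_range_one]
end
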